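/- arXiv:math/0201210 — 5 statements merged into one kernel-verified Lean document; each statement's English description precedes it below -/
import Mathlib

section
/- The comultiplication Δ defined on generators by Δ(a)=a⊗a+b⊗c, Δ(b)=a⊗b+b⊗d, Δ(c)=c⊗a+d⊗c, Δ(d)=c⊗b+d⊗d, Δ(f)=f⊗f extends to a well-defined algebra homomorphism Δ: A_{r,s} → A_{r,s} ⊗ A_{r,s}, i.e. it preserves all ten defining relations of A_{r,s}. -/
open scoped TensorProduct
open TensorProduct

/-- The comultiplication Δ(a)=a⊗a+b⊗c, Δ(b)=a⊗b+b⊗d, Δ(c)=c⊗a+d⊗c,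
Δ(d)=c⊗b+d⊗d, Δ(f)=f⊗f preserves all ten defining relations of A_{r,s},
hence extends to an algebra homomorphism A_{r,s} → A_{r,s} ⊗ A_{r,s}. -/
theorem coproduct_preserves_relations {K : Type*} [Field K] {A : Type*}
    [Ring A] [Algebra K A]
    (r s : K) (hr : r ≠ 0) (hs : s ≠ 0) (a b c d f : A)
    (hab : a * b = r⁻¹ • (b * a)) (hac : a * c = r⁻¹ • (c * a))
    (hbd : b * d = r⁻¹ • (d * b)) (hcd : c * d = r⁻¹ • (d * c))
    (hbc : b * c = c * b) (had : a * d - d * a = (r⁻¹ - r) • (b * c))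
    (haf : a * f = f * a) (hdf : d * f = f * d)
    (hcf : c * f = s • (f * c)) (hbf : b * f = s⁻¹ • (f * b)) :
    let A' : A ⊗[K] A := a ⊗ₜ a + b ⊗ₜ c
    let B' : A ⊗[K] A := a ⊗ₜ b + b ⊗ₜ d
    let C' : A ⊗[K] A := c ⊗ₜ a + d ⊗ₜ c
    let D' : A ⊗[K] A := c ⊗ₜ b + d ⊗ₜ d
    let F' : A ⊗[K] A := f ⊗ₜ f
    A' * B' = r⁻¹ • (B' * A') ∧ A' * C' = r⁻¹ • (C' * A') ∧
    B' * D' = r⁻¹ • (D' * B') ∧ C' * D' = r⁻¹ • (D' * C') ∧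
    B' * C' = C' * B' ∧ A' * D' - D' * A' = (r⁻¹ - r) • (B' * C') ∧
    A' * F' = F' * A' ∧ D' * F' = F' * D' ∧
    C' * F' = s • (F' * C') ∧ B' * F' = s⁻¹ • (F' * B') := by
  intro A' B' C' D' F'
  have had'' : a * d = (r⁻¹ - r) • (b * c) + d * a := by
    rw [← had]; abel
  refine ⟨?_, ?_, ?_, ?_, ?_, ?_, ?_, ?_, ?_, ?_⟩ <;>
  · simp only [A', B', C', D', F', mul_add, add_mul, Algebra.TensorProduct.tmul_mul_tmul,
      hab, hac, hbd, hcd, hbc, had'', haf, hdf, hcf, hbf,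
      smul_mul_assoc, mul_smul_comm, TensorProduct.tmul_add, TensorProduct.add_tmul,
      ← TensorProduct.smul_tmul', TensorProduct.tmul_smul, TensorProduct.tmul_sub, TensorProduct.sub_tmul, smul_add, smul_sub, sub_smul, smul_smul]
    all_goals match_scalars <;> (field_simp; try ring)
end

section
/- The map σ defined on generators of GL_m(2) by σ(a)=a+kc, σ(b)=b+k(d−a)−k²c, σ(c)=c, σ(d)=d−kc extends to a well-defined algebra endomorphism of GL_m(2), i.e. it preserves the Jordanian relations [c,d]=−mc², [c,a]=−mc², [c,b]=−m(ac+cd), [d,a]=−m(d−a)c, [d,b]=−m(d²−δ), [b,a]=−m(δ−a²) with δ=ad−bc+mac; moreover σ is an automorphism with inverse a↦a−kc, b↦b−k(d−a)−k²c, c↦c, d↦d+kc. -/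
open FreeAlgebra

/-- The Jordanian relations of GL_m(2), generators 0=a, 1=b, 2=c, 3=d,
with δ = ad − bc + mac. -/
inductive GLm2Rel (K : Type) [Field K] (m : K) :
    FreeAlgebra K (Fin 4) → FreeAlgebra K (Fin 4) → Prop
  | cd : GLm2Rel K m (ι K 2 * ι K 3 - ι K 3 * ι K 2) (-(m • (ι K 2 * ι K 2)))
  | ca : GLm2Rel K m (ι K 2 * ι K 0 - ι K 0 * ι K 2) (-(m • (ι K 2 * ι K 2)))
  | cb : GLm2Rel K m (ι K 2 * ι K 1 - ι K 1 * ι K 2)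
      (-(m • (ι K 0 * ι K 2 + ι K 2 * ι K 3)))
  | da : GLm2Rel K m (ι K 3 * ι K 0 - ι K 0 * ι K 3)
      (-(m • ((ι K 3 - ι K 0) * ι K 2)))
  | db : GLm2Rel K m (ι K 3 * ι K 1 - ι K 1 * ι K 3)
      (-(m • (ι K 3 * ι K 3 -
        (ι K 0 * ι K 3 - ι K 1 * ι K 2 + m • (ι K 0 * ι K 2)))))
  | ba : GLm2Rel K m (ι K 1 * ι K 0 - ι K 0 * ι K 1)
      (-(m • ((ι K 0 * ι K 3 - ι K 1 * ι K 2 + m • (ι K 0 * ι K 2)) - ι K 0 * ι K 0)))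

/-- The Jordanian quantum group GL_m(2). -/
def GLm2 (K : Type) [Field K] (m : K) : Type := RingQuot (GLm2Rel K m)

noncomputable instance (K : Type) [Field K] (m : K) : Ring (GLm2 K m) :=
  inferInstanceAs (Ring (RingQuot (GLm2Rel K m)))

noncomputable instance (K : Type) [Field K] (m : K) : Algebra K (GLm2 K m) :=
  inferInstanceAs (Algebra K (RingQuot (GLm2Rel K m)))

/-- The generators a, b, c, d of the Jordanian GL_m(2). -/
noncomputable def GLm2Gen (K : Type) [Field K] (m : K) (i : Fin 4) : GLm2 K m :=
  RingQuot.mkAlgHom K (GLm2Rel K m) (ι K i)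

/-! The substitutions σ_k form a one-parameter group, σ_k ∘ σ_l = σ_{k+l}, as one checks on
the generators; hence σ_{-k} inverts σ_k. That σ_k respects the relations is checked by
using the relations themselves as rewriting rules into ordered monomials (a < b < c < d)
on both sides of each image relation. -/

namespace GLm2

variable {K : Type} [Field K] {m : K}

section Lift

variable {A : Type} [Ring A] [Algebra K A]

noncomputable def liftAlgHom (f : Fin 4 → A)
    (hf : ∀ ⦃x y⦄, GLm2Rel K m x y → FreeAlgebra.lift K f x = FreeAlgebra.lift K f y) :
    GLm2 K m →ₐ[K] A :=
  RingQuot.liftAlgHom K ⟨FreeAlgebra.lift K f, hf⟩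

@[simp]
lemma liftAlgHom_gen (f : Fin 4 → A)
    (hf : ∀ ⦃x y⦄, GLm2Rel K m x y → FreeAlgebra.lift K f x = FreeAlgebra.lift K f y)
    (i : Fin 4) : liftAlgHom f hf (GLm2Gen K m i) = f i :=
  (RingQuot.liftAlgHom_mkAlgHom_apply _ _ _ _).trans (FreeAlgebra.lift_ι_apply _ _)

@[ext]
lemma algHom_ext {φ ψ : GLm2 K m →ₐ[K] A} (h : ∀ i, φ (GLm2Gen K m i) = ψ (GLm2Gen K m i)) :
    φ = ψ :=
  RingQuot.ringQuot_ext' K _ _ (FreeAlgebra.hom_ext (funext h))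

end Lift

variable (K m)

local notation "𝐚" => GLm2Gen K m 0
local notation "𝐛" => GLm2Gen K m 1
local notation "𝐜" => GLm2Gen K m 2
local notation "𝐝" => GLm2Gen K m 3

lemma lift_gen_eq_of_rel {x y : FreeAlgebra K (Fin 4)} (h : GLm2Rel K m x y) :
    FreeAlgebra.lift K (GLm2Gen K m) x = FreeAlgebra.lift K (GLm2Gen K m) y := by
  have hmk : FreeAlgebra.lift K (GLm2Gen K m) = RingQuot.mkAlgHom K (GLm2Rel K m) :=
    FreeAlgebra.hom_ext (funext fun i => FreeAlgebra.lift_ι_apply _ _)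
  rw [hmk]
  exact RingQuot.mkAlgHom_rel K h

lemma dc_eq : 𝐝 * 𝐜 = 𝐜 * 𝐝 + m • (𝐜 * 𝐜) := by
  have h := lift_gen_eq_of_rel K m .cd
  simp only [map_sub, map_mul, map_neg, map_smul, FreeAlgebra.lift_ι_apply] at h
  linear_combination (norm := module) -h

lemma ca_eq : 𝐜 * 𝐚 = 𝐚 * 𝐜 - m • (𝐜 * 𝐜) := by
  have h := lift_gen_eq_of_rel K m .ca
  simp only [map_sub, map_mul, map_neg, map_smul, FreeAlgebra.lift_ι_apply] at h
  linear_combination (norm := module) h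

lemma cb_eq : 𝐜 * 𝐛 = 𝐛 * 𝐜 - m • (𝐚 * 𝐜) - m • (𝐜 * 𝐝) := by
  have h := lift_gen_eq_of_rel K m .cb
  simp only [map_sub, map_mul, map_neg, map_smul, map_add, FreeAlgebra.lift_ι_apply] at h
  linear_combination (norm := module) h

lemma da_eq : 𝐝 * 𝐚 = 𝐚 * 𝐝 - m • (𝐜 * 𝐝) - (m * m) • (𝐜 * 𝐜) + m • (𝐚 * 𝐜) := by
  have h := lift_gen_eq_of_rel K m .da
  simp only [map_sub, map_mul, map_neg, map_smul, FreeAlgebra.lift_ι_apply, sub_mul] at h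
  linear_combination (norm := module) h - m • dc_eq K m

lemma db_eq :
    𝐝 * 𝐛 = 𝐛 * 𝐝 - m • (𝐝 * 𝐝) + m • (𝐚 * 𝐝) - m • (𝐛 * 𝐜) + (m * m) • (𝐚 * 𝐜) := by
  have h := lift_gen_eq_of_rel K m .db
  simp only [map_sub, map_mul, map_neg, map_smul, map_add, FreeAlgebra.lift_ι_apply] at h
  linear_combination (norm := module) h

lemma ba_eq :
    𝐛 * 𝐚 = 𝐚 * 𝐛 - m • (𝐚 * 𝐝) + m • (𝐛 * 𝐜) - (m * m) • (𝐚 * 𝐜) + m • (𝐚 * 𝐚) := by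
  have h := lift_gen_eq_of_rel K m .ba
  simp only [map_sub, map_mul, map_neg, map_smul, map_add, FreeAlgebra.lift_ι_apply] at h
  linear_combination (norm := module) h

variable (k l : K)

noncomputable def sigmaGen : Fin 4 → GLm2 K m :=
  ![𝐚 + k • 𝐜, 𝐛 + k • (𝐝 - 𝐚) - (k ^ 2) • 𝐜, 𝐜, 𝐝 - k • 𝐜]

lemma lift_sigmaGen_eq_of_rel ⦃x y : FreeAlgebra K (Fin 4)⦄ (h : GLm2Rel K m x y) :
    FreeAlgebra.lift K (sigmaGen K m k) x = FreeAlgebra.lift K (sigmaGen K m k) y := by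
  cases h <;>
  · simp only [map_sub, map_mul, map_neg, map_smul, map_add, FreeAlgebra.lift_ι_apply,
      sigmaGen, Matrix.cons_val]
    simp only [mul_add, add_mul, mul_sub, sub_mul, smul_mul_assoc, mul_smul_comm, smul_add,
      smul_sub, smul_smul, ca_eq, cb_eq, da_eq, db_eq, dc_eq, ba_eq]
    module

noncomputable def sigma : GLm2 K m →ₐ[K] GLm2 K m :=
  liftAlgHom (sigmaGen K m k) (lift_sigmaGen_eq_of_rel K m k)

@[simp] lemma sigma_a : sigma K m k 𝐚 = 𝐚 + k • 𝐜 := liftAlgHom_gen _ _ 0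

@[simp] lemma sigma_b : sigma K m k 𝐛 = 𝐛 + k • (𝐝 - 𝐚) - (k ^ 2) • 𝐜 := liftAlgHom_gen _ _ 1

@[simp] lemma sigma_c : sigma K m k 𝐜 = 𝐜 := liftAlgHom_gen _ _ 2

@[simp] lemma sigma_d : sigma K m k 𝐝 = 𝐝 - k • 𝐜 := liftAlgHom_gen _ _ 3

lemma sigma_zero : sigma K m 0 = AlgHom.id K (GLm2 K m) := by
  ext i
  fin_cases i <;> simp

lemma sigma_add : sigma K m (k + l) = (sigma K m k).comp (sigma K m l) := by
  ext i
  fin_cases i <;> simp only [Fin.zero_eta, Fin.mk_one, Fin.reduceFinMk, sigma_a, sigma_b,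
    sigma_c, sigma_d, AlgHom.comp_apply, map_add, map_sub, map_smul] <;>
    (match_scalars <;> ring)

noncomputable def sigmaEquiv : GLm2 K m ≃ₐ[K] GLm2 K m :=
  AlgEquiv.ofAlgHom (sigma K m k) (sigma K m (-k))
    (by rw [← sigma_add, add_neg_cancel, sigma_zero])
    (by rw [← sigma_add, neg_add_cancel, sigma_zero])

end GLm2

/-- The map a↦a+kc, b↦b+k(d−a)−k²c, c↦c, d↦d−kc extends to a well-defined
algebra automorphism of the Jordanian GL_m(2), with inverse a↦a−kc,
b↦b−k(d−a)−k²c, c↦c, d↦d+kc. -/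
theorem jordanian_sigma_automorphism (K : Type) [Field K] (m k : K) :
    ∃ σ : GLm2 K m ≃ₐ[K] GLm2 K m,
      σ (GLm2Gen K m 0) = GLm2Gen K m 0 + k • GLm2Gen K m 2 ∧
      σ (GLm2Gen K m 1) = GLm2Gen K m 1 + k • (GLm2Gen K m 3 - GLm2Gen K m 0)
          - (k ^ 2) • GLm2Gen K m 2 ∧
      σ (GLm2Gen K m 2) = GLm2Gen K m 2 ∧
      σ (GLm2Gen K m 3) = GLm2Gen K m 3 - k • GLm2Gen K m 2 ∧
      σ.symm (GLm2Gen K m 0) = GLm2Gen K m 0 - k • GLm2Gen K m 2 ∧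
      σ.symm (GLm2Gen K m 1) = GLm2Gen K m 1 - k • (GLm2Gen K m 3 - GLm2Gen K m 0)
          - (k ^ 2) • GLm2Gen K m 2 ∧
      σ.symm (GLm2Gen K m 2) = GLm2Gen K m 2 ∧
      σ.symm (GLm2Gen K m 3) = GLm2Gen K m 3 + k • GLm2Gen K m 2 := by
  refine ⟨GLm2.sigmaEquiv K m k, ?_, ?_, ?_, ?_, ?_, ?_, ?_, ?_⟩ <;>
    simp only [GLm2.sigmaEquiv, AlgEquiv.ofAlgHom_apply, AlgEquiv.ofAlgHom_symm_apply,
      GLm2.sigma_a, GLm2.sigma_b, GLm2.sigma_c, GLm2.sigma_d] <;>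
    (match_scalars <;> ring)
end

section
/- In the Jordanian algebra GL_m(2), the quantum determinant δ = ad−bc+mac is central: it commutes with a, b, c, and d. -/
/-- In the Jordanian algebra GL_m(2), the quantum determinant
δ = ad − bc + mac is central: it commutes with a, b, c and d. -/
theorem jordanian_delta_central {K : Type*} [Field K] {A : Type*} [Ring A]
    [Algebra K A] (m : K) (a b c d : A)
    (hcd : c * d - d * c = -(m • (c * c)))
    (hca : c * a - a * c = -(m • (c * c)))
    (hcb : c * b - b * c = -(m • (a * c + c * d)))
    (hda : d * a - a * d = -(m • ((d - a) * c)))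
    (hdb : d * b - b * d = -(m • (d * d - (a * d - b * c + m • (a * c)))))
    (hba : b * a - a * b = -(m • ((a * d - b * c + m • (a * c)) - a * a))) :
    let δ : A := a * d - b * c + m • (a * c)
    δ * a = a * δ ∧ δ * b = b * δ ∧ δ * c = c * δ ∧ δ * d = d * δ := by
  intro δ
  have e1 : c * a = a * c - m • (c * c) := by rw [sub_eq_iff_eq_add.mp hca]; abel
  have e2 : c * d = d * c - m • (c * c) := by rw [sub_eq_iff_eq_add.mp hcd]; abel
  have e3 : c * b = b * c - m • (a * c + c * d) := by rw [sub_eq_iff_eq_add.mp hcb]; abel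
  have e4 : d * a = a * d - m • ((d - a) * c) := by rw [sub_eq_iff_eq_add.mp hda]; abel
  have e5 : d * b = b * d - m • (d * d - (a * d - b * c + m • (a * c))) := by rw [sub_eq_iff_eq_add.mp hdb]; abel
  have e6 : b * a = a * b - m • ((a * d - b * c + m • (a * c)) - a * a) := by rw [sub_eq_iff_eq_add.mp hba]; abel
  have e1' : ∀ x : A, c * (a * x) = a * (c * x) - m • (c * (c * x)) := by
    intro x; rw [← mul_assoc, e1, sub_mul, smul_mul_assoc, mul_assoc, mul_assoc]
  have e2' : ∀ x : A, c * (d * x) = d * (c * x) - m • (c * (c * x)) := by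
    intro x; rw [← mul_assoc, e2, sub_mul, smul_mul_assoc, mul_assoc, mul_assoc]
  have e3' : ∀ x : A, c * (b * x) = b * (c * x) - m • ((a * c + c * d) * x) := by
    intro x; rw [← mul_assoc, e3, sub_mul, smul_mul_assoc, mul_assoc]
  have e4' : ∀ x : A, d * (a * x) = a * (d * x) - m • (((d - a) * c) * x) := by
    intro x; rw [← mul_assoc, e4, sub_mul, smul_mul_assoc, mul_assoc]
  have e5' : ∀ x : A, d * (b * x) = b * (d * x) - m • ((d * d - (a * d - b * c + m • (a * c))) * x) := by
    intro x; rw [← mul_assoc, e5, sub_mul, smul_mul_assoc, mul_assoc]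
  have e6' : ∀ x : A, b * (a * x) = a * (b * x) - m • (((a * d - b * c + m • (a * c)) - a * a) * x) := by
    intro x; rw [← mul_assoc, e6, sub_mul, smul_mul_assoc, mul_assoc]
  refine ⟨?_, ?_, ?_, ?_⟩ <;>
  · show _ = _
    simp only [δ, mul_add, add_mul, mul_sub, sub_mul, smul_add, smul_sub, smul_smul,
      mul_smul_comm, smul_mul_assoc, mul_assoc, e1, e2, e3, e4, e5, e6, e1', e2', e3', e4', e5', e6']
    abel
end

section
/- The assignment d(a)=(r^{-2}−1)aω¹−λbω⁺, d(b)=λ²bω¹−λaω⁻+(r^{-2}−1)bω², d(c)=(r^{-2}−1)cω¹−λdω⁺, d(d)=λ²dω¹−λcω⁻+(r^{-2}−1)dω², d(f)=(r^{-2}−1)fω⁰, together with the bimodule commutation relations (ω⁰a=aω⁰, ω¹a=r^{-2}aω¹, ω⁺a=r^{-1}aω⁺, ω⁻a=r^{-1}aω⁻−λr^{-1}bω¹, ω²a=aω²−λbω⁺, and analogously for b,c,d,f as listed, in particular ω⁰f=r^{-2}fω⁰, ω¹f=fω¹, ω⁺f=sfω⁺, ω⁻f=s^{-1}fω⁻,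 ω²f=fω²), is consistent with the Leibniz rule applied to the relation af=fa: d(af) = d(fa). -/
open MulOpposite

/-- Leibniz consistency of the bicovariant calculus on A_{r,s} with the cross
relation af = fa: with d(a)=(r⁻²−1)aω¹−λbω⁺, d(f)=(r⁻²−1)fω⁰ and the bimodule
commutation relations of the one-forms, one has d(a)f + a d(f) = d(f)a + f d(a). -/
theorem calculus_consistent_af {K : Type*} [Field K] {A : Type*} [Ring A] [Algebra K A]
    {Γ : Type*} [AddCommGroup Γ] [Module K Γ] [Module A Γ] [Module Aᵐᵒᵖ Γ]
    [IsScalarTower K A Γ] [SMulCommClass A Aᵐᵒᵖ Γ]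
    (r s : K) (hr : r ≠ 0) (hs : s ≠ 0) (a b c d f : A) (ω0 ω1 ωp ωm ω2 : Γ)
    -- algebra relations of A_{r,s}
    (hab : a * b = r⁻¹ • (b * a)) (hac : a * c = r⁻¹ • (c * a))
    (hbd : b * d = r⁻¹ • (d * b)) (hcd : c * d = r⁻¹ • (d * c))
    (hbc : b * c = c * b) (had : a * d - d * a = (r⁻¹ - r) • (b * c))
    (haf : a * f = f * a) (hdf : d * f = f * d)
    (hcf : c * f = s • (f * c)) (hbf : b * f = s⁻¹ • (f * b))
    -- commutation relations of the one-forms with a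
    (h0a : op a • ω0 = a • ω0)
    (h1a : op a • ω1 = (r ^ 2)⁻¹ • (a • ω1))
    (hpa : op a • ωp = r⁻¹ • (a • ωp))
    (hma : op a • ωm = r⁻¹ • (a • ωm) - ((r - r⁻¹) * r⁻¹) • (b • ω1))
    (h2a : op a • ω2 = a • ω2 - (r - r⁻¹) • (b • ωp))
    -- commutation relations of the one-forms with b
    (h0b : op b • ω0 = b • ω0)
    (h1b : op b • ω1 = b • ω1)
    (hpb : op b • ωp = r⁻¹ • (b • ωp) - ((r - r⁻¹) * r⁻¹) • (a • ω1))
    (hmb : op b • ωm = r⁻¹ • (b • ωm))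
    (h2b : op b • ω2 = (r ^ 2)⁻¹ • (b • ω2) - ((r - r⁻¹) * r⁻¹) • (a • ωm)
        + ((r - r⁻¹) ^ 2) • (b • ω1))
    -- commutation relations of the one-forms with f
    (h0f : op f • ω0 = (r ^ 2)⁻¹ • (f • ω0))
    (h1f : op f • ω1 = f • ω1)
    (hpf : op f • ωp = s • (f • ωp))
    (hmf : op f • ωm = s⁻¹ • (f • ωm))
    (h2f : op f • ω2 = f • ω2) :
    let da : Γ := ((r ^ 2)⁻¹ - 1) • (a • ω1) - (r - r⁻¹) • (b • ωp)
    let df : Γ := ((r ^ 2)⁻¹ - 1) • (f • ω0)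
    op f • da + a • df = op a • df + f • da := by
  intro da df
  have key : ∀ (g x : A) (k : K) (ω : Γ), op g • (k • (x • ω)) = k • (x • (op g • ω)) := by
    intro g x k ω
    rw [← smul_assoc k x ω, ← smul_comm (k • x) (op g) ω, smul_assoc]
  have e1 : op f • ((( r ^ 2)⁻¹ - 1) • (a • ω1)) = ((r ^ 2)⁻¹ - 1) • ((f * a) • ω1) := by
    rw [key, h1f, smul_smul, haf]
  have e2 : op f • ((r - r⁻¹) • (b • ωp)) = (r - r⁻¹) • ((f * b) • ωp) := by
    rw [key, hpf, smul_comm b s, smul_smul, ← mul_smul b f, hbf, smul_assoc, smul_smul,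
      mul_assoc, mul_inv_cancel₀ hs, mul_one]
  have e3 : a • df = ((r ^ 2)⁻¹ - 1) • ((f * a) • ω0) := by
    show a • (((r ^ 2)⁻¹ - 1) • (f • ω0)) = _
    rw [smul_comm, smul_smul, haf]
  have e4 : op a • df = ((r ^ 2)⁻¹ - 1) • ((f * a) • ω0) := by
    show op a • (((r ^ 2)⁻¹ - 1) • (f • ω0)) = _
    rw [key, h0a, smul_smul]
  have e5 : f • da = ((r ^ 2)⁻¹ - 1) • ((f * a) • ω1) - (r - r⁻¹) • ((f * b) • ωp) := by
    show f • (((r ^ 2)⁻¹ - 1) • (a • ω1) - (r - r⁻¹) • (b • ωp)) = _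
    rw [smul_sub, smul_comm, smul_comm f (r - r⁻¹), smul_smul, smul_smul]
  show op f • (((r ^ 2)⁻¹ - 1) • (a • ω1) - (r - r⁻¹) • (b • ωp)) + a • df = op a • df + f • da
  rw [smul_sub, e1, e2, e3, e4, e5]
  abel
end

section
/- With the same differential calculus data, the Leibniz rule applied to the cross relation cf=sfc is consistent: d(cf) = s·d(fc), i.e. d(c)f + c d(f) = s(d(f)c + f d(c)) holds identically in the bimodule Γ after applying the ω-commutation relations. -/
open MulOpposite

/-- Leibniz consistency of the bicovariant calculus on A_{r,s} with the cross
relation cf = sfc: with d(c)=(r⁻²−1)cω¹−λdω⁺, d(f)=(r⁻²−1)fω⁰ and the bimodule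
commutation relations of the one-forms, one has
d(c)f + c d(f) = s(d(f)c + f d(c)). -/
theorem calculus_consistent_cf {K : Type*} [Field K] {A : Type*} [Ring A] [Algebra K A]
    {Γ : Type*} [AddCommGroup Γ] [Module K Γ] [Module A Γ] [Module Aᵐᵒᵖ Γ]
    [IsScalarTower K A Γ] [SMulCommClass A Aᵐᵒᵖ Γ]
    (r s : K) (hr : r ≠ 0) (hs : s ≠ 0) (a b c d f : A) (ω0 ω1 ωp ωm ω2 : Γ)
    -- algebra relations of A_{r,s}
    (hab : a * b = r⁻¹ • (b * a)) (hac : a * c = r⁻¹ • (c * a))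
    (hbd : b * d = r⁻¹ • (d * b)) (hcd : c * d = r⁻¹ • (d * c))
    (hbc : b * c = c * b) (had : a * d - d * a = (r⁻¹ - r) • (b * c))
    (haf : a * f = f * a) (hdf : d * f = f * d)
    (hcf : c * f = s • (f * c)) (hbf : b * f = s⁻¹ • (f * b))
    -- commutation relations of the one-forms with c
    (h0c : op c • ω0 = c • ω0)
    (h1c : op c • ω1 = (r ^ 2)⁻¹ • (c • ω1))
    (hpc : op c • ωp = r⁻¹ • (c • ωp))
    (hmc : op c • ωm = r⁻¹ • (c • ωm) - ((r - r⁻¹) * r⁻¹) • (d • ω1))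
    (h2c : op c • ω2 = c • ω2 - (r - r⁻¹) • (d • ωp))
    -- commutation relations of the one-forms with d
    (h0d : op d • ω0 = d • ω0)
    (h1d : op d • ω1 = d • ω1)
    (hpd : op d • ωp = r⁻¹ • (d • ωp) - ((r - r⁻¹) * r⁻¹) • (c • ω1))
    (hmd : op d • ωm = r⁻¹ • (d • ωm))
    (h2d : op d • ω2 = (r ^ 2)⁻¹ • (d • ω2) - ((r - r⁻¹) * r⁻¹) • (c • ωm)
        + ((r - r⁻¹) ^ 2) • (d • ω1))
    -- commutation relations of the one-forms with f
    (h0f : op f • ω0 = (r ^ 2)⁻¹ • (f • ω0))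
    (h1f : op f • ω1 = f • ω1)
    (hpf : op f • ωp = s • (f • ωp))
    (hmf : op f • ωm = s⁻¹ • (f • ωm))
    (h2f : op f • ω2 = f • ω2) :
    let dc : Γ := ((r ^ 2)⁻¹ - 1) • (c • ω1) - (r - r⁻¹) • (d • ωp)
    let df : Γ := ((r ^ 2)⁻¹ - 1) • (f • ω0)
    op f • dc + c • df = s • (op c • df + f • dc) := by
  intro dc df
  show op f • (((r ^ 2)⁻¹ - 1) • (c • ω1) - (r - r⁻¹) • (d • ωp)) + c • (((r ^ 2)⁻¹ - 1) • (f • ω0))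
      = s • (op c • (((r ^ 2)⁻¹ - 1) • (f • ω0)) + f • (((r ^ 2)⁻¹ - 1) • (c • ω1) - (r - r⁻¹) • (d • ωp)))
  have comm : ∀ (x y : A) (γ : Γ), op x • (y • γ) = y • (op x • γ) :=
    fun x y γ => (smul_comm y (op x) γ).symm
  have e1 : op f • (c • ω1) = s • (f • (c • ω1)) := by
    rw [comm, h1f, ← mul_smul, hcf, smul_assoc, mul_smul]
  have e2 : op f • (d • ωp) = s • (f • (d • ωp)) := by
    rw [comm, hpf, smul_comm d s, ← mul_smul, hdf, mul_smul]
  have e3 : c • (f • ω0) = s • (f • (c • ω0)) := by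
    rw [← mul_smul, hcf, smul_assoc, mul_smul]
  have e4 : op c • (f • ω0) = f • (c • ω0) := by
    rw [comm, h0c]
  have opK : ∀ (x y : A) (k : K) (γ : Γ), op x • (k • y • γ) = k • (op x • y • γ) := by
    intro x y k γ
    rw [← smul_assoc k y γ, ← smul_comm (k • y) (op x) γ, smul_assoc, smul_comm y (op x)]
  have cK : ∀ (x y : A) (k : K) (γ : Γ), x • (k • y • γ) = k • (x • y • γ) := by
    intro x y k γ
    rw [← smul_assoc k y γ, ← mul_smul, mul_smul_comm, smul_assoc, mul_smul]
  rw [smul_sub]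
  rw [opK f c]
  rw [opK f d]
  rw [e1, e2]
  rw [cK c f]
  rw [e3]
  rw [opK c f]
  rw [e4]
  rw [smul_sub f, cK f c, cK f d]
  simp only [smul_add, smul_sub, smul_smul]
  ring_nf
  abel
end
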